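/- Let G be a 2-edge-connected graph without cut vertices and without non-isolating 2-vertex cuts, {u,v,w} a large 3-vertex cut of G, and (V1, V2) a partition of V(G) ∖ {u,v,w} with 7 ≤ |V1| ≤ |V2| and no edges of G between V1 and V2. Let G_1 = G[V1 ∪ {u,v,w}], G_2 = G[V2 ∪ {u,v,w}] minus the edges uv, vw, uw, and let G'_i be obtained from G_i by contracting {u,v,w} into a single vertex, for i ∈ {1,2}. If H'_1 and H'_2 are 2-edge-connected spanning subgraphs of G'_1 and G'_2, respectively, then there exists an edge set F' ⊆ E(G) with |F'| ≤ 4 such that H'_1 ∪ H'_2 ∪ F' (interpreting the edges of H'_i as the corresponding edges of G after decontracting {u,v,w}) is a 2-edge-connected spanning subgraph of G. -/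

import Mathlib

open SimpleGraph

open scoped Classical

namespace ECSS

/-! ### Generic graph notions -/

section Generic

variable {W : Type*}

/-- The number of connected components of a graph. -/
noncomputable def numComponents (Γ : SimpleGraph W) : ℕ :=
  Nat.card Γ.ConnectedComponent

/-- Deleting the vertex set `S` increases the number of connected components. -/
def IsCutSet (Γ : SimpleGraph W) (S : Set W) : Prop :=
  numComponents Γ < numComponents (Γ.induce Sᶜ)

/-- A `k`-vertex cut: a set of `k` vertices whose deletion increases the number of
connected components. -/
def IsVertexCut (Γ : SimpleGraph W) (S : Set W) (k : ℕ) : Prop :=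
  S.ncard = k ∧ IsCutSet Γ S

/-- 2-vertex-connected: connected and with no cut vertex. -/
def TwoVertexConnected (Γ : SimpleGraph W) : Prop :=
  Γ.Connected ∧ ∀ v : W, ¬ IsCutSet Γ {v}

/-- 2-edge-connected: connected, and still connected after deleting any single edge. -/
def IsTwoEdgeConnected (Γ : SimpleGraph W) : Prop :=
  Γ.Connected ∧ ∀ e ∈ Γ.edgeSet, (Γ.deleteEdges {e}).Connected

/-- A small 3-vertex cut: deleting it leaves exactly two connected components,
one of which has at most 6 vertices. -/
def IsSmall3Cut (Γ : SimpleGraph W) (S : Set W) : Prop :=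
  IsVertexCut Γ S 3 ∧ numComponents (Γ.induce Sᶜ) = 2 ∧
    ∃ c : (Γ.induce Sᶜ).ConnectedComponent, c.supp.ncard ≤ 6

/-- A large 3-vertex cut: a 3-vertex cut that is not small. -/
def IsLarge3Cut (Γ : SimpleGraph W) (S : Set W) : Prop :=
  IsVertexCut Γ S 3 ∧ ¬ IsSmall3Cut Γ S

/-- An isolating 2-vertex cut: deleting it leaves exactly two connected components,
one of which has size 1. -/
def IsIsolating2Cut (Γ : SimpleGraph W) (S : Set W) : Prop :=
  IsVertexCut Γ S 2 ∧ numComponents (Γ.induce Sᶜ) = 2 ∧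
    ∃ c : (Γ.induce Sᶜ).ConnectedComponent, c.supp.ncard = 1

/-- A non-isolating 2-vertex cut: a 2-vertex cut that is not isolating. -/
def IsNonIsolating2Cut (Γ : SimpleGraph W) (S : Set W) : Prop :=
  IsVertexCut Γ S 2 ∧ ¬ IsIsolating2Cut Γ S

/-- An irrelevant edge `xy`: an edge such that `{x, y}` is a 2-vertex cut. -/
def IsIrrelevantEdge (Γ : SimpleGraph W) (x y : W) : Prop :=
  Γ.Adj x y ∧ IsVertexCut Γ {x, y} 2

/-- A matching of size `k` between `V1` and `V2`: `k` pairwise vertex-disjoint edges,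
each with one endpoint in `V1` and the other in `V2`. -/
def HasMatchingBetween (Γ : SimpleGraph W) (V1 V2 : Set W) (k : ℕ) : Prop :=
  ∃ f g : Fin k → W,
    (∀ i, f i ∈ V1 ∧ g i ∈ V2 ∧ Γ.Adj (f i) (g i)) ∧
    ∀ i j, i ≠ j → f i ≠ f j ∧ g i ≠ g j ∧ f i ≠ g j ∧ g i ≠ f j

/-- A non-trivial segment: a maximal 2-node-connected (induced) subgraph with at
least 3 nodes. -/
def IsNontrivialSegment (Γ : SimpleGraph W) (S : Set W) : Prop :=
  3 ≤ S.ncard ∧ TwoVertexConnected (Γ.induce S) ∧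
    ∀ S' : Set W, S ⊆ S' → TwoVertexConnected (Γ.induce S') → S' = S

/-- A trivial segment: a node that is not contained in any non-trivial segment. -/
def IsTrivialSegment (Γ : SimpleGraph W) (A : W) : Prop :=
  ∀ S : Set W, IsNontrivialSegment Γ S → A ∉ S

/-- A pendant node: a node adjacent to exactly one other node. -/
def IsPendantNode (Γ : SimpleGraph W) (A : W) : Prop :=
  (Γ.neighborSet A).ncard = 1

/-- The graph `Γ` is a path from `P` to `Q` (of length at least 1):
there is a path walk from `P` to `Q` visiting every vertex and using every edge. -/
def IsPathGraphWithEnds (Γ : SimpleGraph W) (P Q : W) : Prop :=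
  ∃ p : Γ.Walk P Q, p.IsPath ∧ 1 ≤ p.length ∧ (∀ n : W, n ∈ p.support) ∧
    ∀ e ∈ Γ.edgeSet, e ∈ p.edges

end Generic

/-! ### Subgraph notions -/

variable {V : Type*}

/-- A subgraph is 2-edge-connected: connected and still connected after deleting any
single edge. -/
def SubTwoEC {G : SimpleGraph V} (K : G.Subgraph) : Prop :=
  K.Connected ∧ ∀ e ∈ K.edgeSet, (K.deleteEdges {e}).Connected

/-- A 2-edge-connected spanning subgraph (2-ECSS) of `G`. -/
def IsTwoECSS (G : SimpleGraph V) (H : G.Subgraph) : Prop :=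
  H.IsSpanning ∧ SubTwoEC H

/-- The minimum number of edges of a 2-ECSS of `G`. -/
noncomputable def opt (G : SimpleGraph V) : ℕ :=
  sInf {n : ℕ | ∃ H : G.Subgraph, IsTwoECSS G H ∧ H.edgeSet.ncard = n}

/-- `C` is a (maximal) connected component of `H`. -/
def IsComponent {G : SimpleGraph V} (H C : G.Subgraph) : Prop :=
  C ≤ H ∧ C.Connected ∧ ∀ C' : G.Subgraph, C ≤ C' → C' ≤ H → C'.Connected → C' = C

/-- `B` is a block of `C`: a maximal 2-edge-connected subgraph. -/
def IsBlock {G : SimpleGraph V} (C B : G.Subgraph) : Prop :=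
  B ≤ C ∧ SubTwoEC B ∧ ∀ B' : G.Subgraph, B ≤ B' → B' ≤ C → SubTwoEC B' → B' = B

/-- `e` is a bridge of the subgraph `C`: deleting it disconnects its endpoints. -/
def IsBridgeIn {G : SimpleGraph V} (C : G.Subgraph) (e : Sym2 V) : Prop :=
  e ∈ C.edgeSet ∧
    ∀ a b : V, s(a, b) = e → ¬ (C.deleteEdges {e}).spanningCoe.Reachable a b

/-- The subgraph contains a bridge ("complex" when it is a component). -/
def HasBridge {G : SimpleGraph V} (C : G.Subgraph) : Prop :=
  ∃ e, IsBridgeIn C e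

/-- The subgraph has no bridges. -/
def Bridgeless {G : SimpleGraph V} (H : G.Subgraph) : Prop :=
  ∀ e : Sym2 V, ¬ IsBridgeIn H e

/-- The subgraph `C` is a cycle on `i` vertices (connected and 2-regular). -/
def IsCycleOn {G : SimpleGraph V} (C : G.Subgraph) (i : ℕ) : Prop :=
  C.Connected ∧ C.verts.ncard = i ∧ ∀ v ∈ C.verts, (C.neighborSet v).ncard = 2

/-- A block `B` of a component `C` is pendant if `C` minus the vertices of `B`
is connected. -/
def IsPendant {G : SimpleGraph V} (C B : G.Subgraph) : Prop :=
  (C.deleteVerts B.verts).Connected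

/-- A 2-edge cover: a spanning subgraph in which every vertex has degree at least 2. -/
def IsTwoEdgeCover {G : SimpleGraph V} (H : G.Subgraph) : Prop :=
  H.IsSpanning ∧ ∀ v : V, 2 ≤ (H.neighborSet v).ncard

/-- A 2-edge cover is triangle-free if no component is a triangle. -/
def IsTriangleFree {G : SimpleGraph V} (H : G.Subgraph) : Prop :=
  ∀ C : G.Subgraph, IsComponent H C → ¬ IsCycleOn C 3

/-- A canonical 2-edge cover: every non-complex component is a cycle on `i` vertices
for some `4 ≤ i ≤ 7` or has at least 8 edges, and in every complex component each
pendant block has at least 6 edges and each non-pendant block has at least 4 edges. -/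
def IsCanonical {G : SimpleGraph V} (H : G.Subgraph) : Prop :=
  (∀ C : G.Subgraph, IsComponent H C → ¬ HasBridge C →
      (∃ i, 4 ≤ i ∧ i ≤ 7 ∧ IsCycleOn C i) ∨ 8 ≤ C.edgeSet.ncard) ∧
  (∀ C : G.Subgraph, IsComponent H C → HasBridge C → ∀ B : G.Subgraph, IsBlock C B →
      (IsPendant C B → 6 ≤ B.edgeSet.ncard) ∧ (¬ IsPendant C B → 4 ≤ B.edgeSet.ncard))

/-- Credit of a single component: a complex component gets its component credit 1,
plus 1 for each block, plus 1/4 for each bridge; a 2EC component with at least 8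
edges gets 2; a 2EC component that is a cycle `C_i` gets `i/4` (its number of edges
over 4). -/
noncomputable def componentCredit {G : SimpleGraph V} (C : G.Subgraph) : ℚ :=
  if HasBridge C then
    1 + ({B : G.Subgraph | IsBlock C B}.ncard : ℚ)
      + ({e : Sym2 V | IsBridgeIn C e}.ncard : ℚ) / 4
  else if 8 ≤ C.edgeSet.ncard then 2
  else (C.edgeSet.ncard : ℚ) / 4

/-- Total credit of a 2-edge cover: sum of the credits of its components. -/
noncomputable def credit {G : SimpleGraph V} (H : G.Subgraph) : ℚ :=
  ∑ᶠ C ∈ {C : G.Subgraph | IsComponent H C}, componentCredit C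

/-- Cost of a 2-edge cover: number of edges plus total credit. -/
noncomputable def cost {G : SimpleGraph V} (H : G.Subgraph) : ℚ :=
  (H.edgeSet.ncard : ℚ) + credit H

/-- An `α`-contractible subgraph: a 2-edge-connected subgraph `C` (with at least one
edge) such that every 2-ECSS of `G` contains at least `|E(C)|/α` edges with both
endpoints in `V(C)`. -/
def IsContractible (α : ℚ) (G : SimpleGraph V) (C : G.Subgraph) : Prop :=
  SubTwoEC C ∧ ∀ H : G.Subgraph, IsTwoECSS G H →
    (C.edgeSet.ncard : ℚ) / α ≤ ({e ∈ H.edgeSet | ∀ x ∈ e, x ∈ C.verts}.ncard : ℚ)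

/-- An `(α, ε)`-structured graph: simple (automatic), 2-vertex-connected, with at
least `4/ε` vertices, and containing no `α`-contractible subgraph with at most `2/ε`
edges, no irrelevant edge, no non-isolating 2-vertex cut, and no large 3-vertex cut. -/
def IsStructured (α ε : ℚ) (G : SimpleGraph V) : Prop :=
  TwoVertexConnected G ∧ (4 / ε ≤ (Nat.card V : ℚ)) ∧
  (∀ C : G.Subgraph, C.edgeSet.Nonempty → (C.edgeSet.ncard : ℚ) ≤ 2 / ε →
      ¬ IsContractible α G C) ∧
  (∀ x y : V, ¬ IsIrrelevantEdge G x y) ∧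
  (∀ S : Set V, ¬ IsNonIsolating2Cut G S) ∧
  (∀ S : Set V, ¬ IsLarge3Cut G S)

/-! ### The component graph -/

/-- The component graph `Ĝ_H`: nodes are the components of `H`, two nodes being
adjacent if some edge of `G` joins the corresponding components (self-loops are
discarded). -/
def compGraph {G : SimpleGraph V} (H : G.Subgraph) :
    SimpleGraph {C : G.Subgraph // IsComponent H C} where
  Adj A B := A ≠ B ∧ ∃ a b : V, a ∈ A.1.verts ∧ b ∈ B.1.verts ∧ G.Adj a b
  symm := by
    constructor
    rintro A B ⟨hne, a, b, ha, hb, hab⟩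
    exact ⟨hne.symm, b, a, hb, ha, hab.symm⟩
  loopless := by
    constructor
    rintro A ⟨hne, -⟩
    exact hne rfl

/-- A cycle in the component graph `Ĝ_H` (as a multigraph), given by pairwise
distinct components `D i` and pairwise distinct edges of `G`, the `i`-th edge
joining a vertex `a i` of `D i` to a vertex `b i` of `D (i+1)`. -/
def IsCompCycle {G : SimpleGraph V} (H : G.Subgraph) {m : ℕ}
    (D : Fin (m + 2) → G.Subgraph) (a b : Fin (m + 2) → V) : Prop :=
  Function.Injective D ∧ (∀ i, IsComponent H (D i)) ∧
  (∀ i, a i ∈ (D i).verts ∧ b i ∈ (D (i + 1)).verts ∧ G.Adj (a i) (b i)) ∧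
  Function.Injective fun i => s(a i, b i)

/-! ### Contracting the 2-edge-connected components: solution types -/

/-- `x` and `y` lie in the same 2-edge-connected component of `K`: they are
reachable, and remain reachable after the deletion of any single edge. -/
def SameTwoEC {G : SimpleGraph V} (K : G.Subgraph) (x y : V) : Prop :=
  K.spanningCoe.Reachable x y ∧
    ∀ e ∈ K.edgeSet, (K.deleteEdges {e}).spanningCoe.Reachable x y

/-- The setoid on the vertices of `K` identifying vertices in the same
2-edge-connected component. -/
def twoECSetoid {G : SimpleGraph V} (K : G.Subgraph) : Setoid K.verts where
  r x y := SameTwoEC K x.1 y.1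
  iseqv := by
    constructor
    · exact fun x => ⟨Reachable.refl _, fun e _ => Reachable.refl _⟩
    · exact fun h => ⟨h.1.symm, fun e he => (h.2 e he).symm⟩
    · exact fun h h' => ⟨h.1.trans h'.1, fun e he => (h.2 e he).trans (h'.2 e he)⟩

/-- The super-nodes: 2-edge-connected components of `K`, as a quotient. -/
def SNode {G : SimpleGraph V} (K : G.Subgraph) :=
  Quotient (twoECSetoid K)

/-- The graph obtained from `K` by contracting each 2-edge-connected component into
a single super-node. -/
def contractTwoEC {G : SimpleGraph V} (K : G.Subgraph) : SimpleGraph (SNode K) where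
  Adj P Q := P ≠ Q ∧ ∃ x y : K.verts,
    Quotient.mk (twoECSetoid K) x = P ∧ Quotient.mk (twoECSetoid K) y = Q ∧ K.Adj x.1 y.1
  symm := by
    constructor
    rintro P Q ⟨hne, x, y, hx, hy, hxy⟩
    exact ⟨hne.symm, y, x, hy, hx, hxy.symm⟩
  loopless := by
    constructor
    rintro P ⟨hne, -⟩
    exact hne rfl

/-- The super-node containing a vertex. -/
def cls {G : SimpleGraph V} (K : G.Subgraph) (x : K.verts) : SNode K :=
  Quotient.mk (twoECSetoid K) x

/-- Type A: the contraction is a single super-node. -/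
def TypeA {G : SimpleGraph V} (K : G.Subgraph) (u v w : K.verts) : Prop :=
  ∀ n : SNode K, n = cls K u

/-- Type B1: the contraction is a path `C₁ - ⋯ - C_k` of length at least 1 with
`u, v, w ∈ C₁ ∪ C_k` and at most two of `u, v, w` in each of `C₁` and `C_k`. -/
def TypeB1 {G : SimpleGraph V} (K : G.Subgraph) (u v w : K.verts) : Prop :=
  ∃ P Q : SNode K, IsPathGraphWithEnds (contractTwoEC K) P Q ∧
    (cls K u = P ∨ cls K u = Q) ∧ (cls K v = P ∨ cls K v = Q) ∧
    (cls K w = P ∨ cls K w = Q) ∧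
    ¬ (cls K u = P ∧ cls K v = P ∧ cls K w = P) ∧
    ¬ (cls K u = Q ∧ cls K v = Q ∧ cls K w = Q)

/-- Type B2: the contraction consists of two isolated super-nodes, each containing
at most two of `u, v, w`. -/
def TypeB2 {G : SimpleGraph V} (K : G.Subgraph) (u v w : K.verts) : Prop :=
  ∃ P Q : SNode K, P ≠ Q ∧ (∀ n : SNode K, n = P ∨ n = Q) ∧
    (∀ P' Q' : SNode K, ¬ (contractTwoEC K).Adj P' Q') ∧
    ¬ (cls K u = cls K v ∧ cls K v = cls K w)

/-- Type C1: the contraction is a tree and `u, v, w` lie in three distinct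
super-nodes. -/
def TypeC1 {G : SimpleGraph V} (K : G.Subgraph) (u v w : K.verts) : Prop :=
  (contractTwoEC K).IsTree ∧
    cls K u ≠ cls K v ∧ cls K u ≠ cls K w ∧ cls K v ≠ cls K w

/-- Type C2: the contraction is a path of length at least 1 together with one
isolated super-node, such that each of the two path ends and the isolated super-node
contains exactly one of `u, v, w`. -/
def TypeC2 {G : SimpleGraph V} (K : G.Subgraph) (u v w : K.verts) : Prop :=
  ∃ P Q R : SNode K,
    (∃ p : (contractTwoEC K).Walk P Q, p.IsPath ∧ 1 ≤ p.length ∧ R ∉ p.support ∧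
      (∀ n : SNode K, n ∈ p.support ∨ n = R) ∧
      ∀ e ∈ (contractTwoEC K).edgeSet, e ∈ p.edges) ∧
    cls K u ≠ cls K v ∧ cls K u ≠ cls K w ∧ cls K v ≠ cls K w ∧
    ({cls K u, cls K v, cls K w} : Set (SNode K)) = {P, Q, R}

/-- Type C3: the contraction consists of the three isolated super-nodes of
`u`, `v` and `w`. -/
def TypeC3 {G : SimpleGraph V} (K : G.Subgraph) (u v w : K.verts) : Prop :=
  cls K u ≠ cls K v ∧ cls K u ≠ cls K w ∧ cls K v ≠ cls K w ∧
  (∀ n : SNode K, n = cls K u ∨ n = cls K v ∨ n = cls K w) ∧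
  ∀ P Q : SNode K, ¬ (contractTwoEC K).Adj P Q

/-- `K` is of one of the six solution types with respect to `u, v, w`. -/
def OfAnyType {G : SimpleGraph V} (K : G.Subgraph) (u v w : K.verts) : Prop :=
  TypeA K u v w ∨ TypeB1 K u v w ∨ TypeB2 K u v w ∨
    TypeC1 K u v w ∨ TypeC2 K u v w ∨ TypeC3 K u v w

/-! ### Sides of a 3-vertex cut, contracted sides, and related helpers -/

/-- The induced subgraph `G[V₁ ∪ {u,v,w}]` (as a subgraph of `G`). -/
def sideOne (G : SimpleGraph V) (V1 : Set V) (u v w : V) : G.Subgraph :=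
  (⊤ : G.Subgraph).induce (V1 ∪ {u, v, w})

/-- The induced subgraph `G[V₂ ∪ {u,v,w}]` minus the edges `uv`, `vw`, `uw`. -/
def sideTwo (G : SimpleGraph V) (V2 : Set V) (u v w : V) : G.Subgraph :=
  ((⊤ : G.Subgraph).induce (V2 ∪ {u, v, w})).deleteEdges {s(u, v), s(v, w), s(u, w)}

/-- The connected component of the subgraph `K` containing the vertex `z`. -/
def compOf {G : SimpleGraph V} (K : G.Subgraph) (z : V) : G.Subgraph where
  verts := {y | y ∈ K.verts ∧ K.spanningCoe.Reachable z y}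
  Adj x y := K.Adj x y ∧ K.spanningCoe.Reachable z x
  adj_sub := fun h => K.adj_sub h.1
  edge_vert := fun h => ⟨K.edge_vert h.1, h.2⟩
  symm := by
    constructor
    rintro x y ⟨hxy, hzx⟩
    exact ⟨hxy.symm, hzx.trans (SimpleGraph.Adj.reachable (by exact hxy))⟩

/-- There is an edge of `Gi` that is not an edge of `Hi` between `A` and `B`. -/
def CrossEdge {G : SimpleGraph V} (Gi Hi : G.Subgraph) (A B : Set V) : Prop :=
  ∃ a b : V, a ∈ A ∧ b ∈ B ∧ Gi.Adj a b ∧ ¬ Hi.Adj a b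

/-- Claim (1) of the spanning-tree lemma for 3-vertex cuts. -/
def ClaimOne {G : SimpleGraph V} (Gi Hi : G.Subgraph) (x : V) : Prop :=
  compOf Hi x ≠ Hi →
    ∃ a b : V, a ∈ (compOf Hi x).verts ∧ b ∈ Hi.verts ∧ b ∉ (compOf Hi x).verts ∧
      Gi.Adj a b ∧ ¬ Hi.Adj a b

/-- Claim (2) of the spanning-tree lemma for 3-vertex cuts. -/
def ClaimTwo {G : SimpleGraph V} (Gi Hi : G.Subgraph) (u v w : V) : Prop :=
  (Disjoint (compOf Hi u).verts (compOf Hi v).verts ∧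
      Disjoint (compOf Hi v).verts (compOf Hi w).verts ∧
      Disjoint (compOf Hi u).verts (compOf Hi w).verts) →
    (CrossEdge Gi Hi (compOf Hi u).verts (compOf Hi v).verts ∧
        CrossEdge Gi Hi (compOf Hi v).verts (compOf Hi w).verts) ∨
      (CrossEdge Gi Hi (compOf Hi v).verts (compOf Hi w).verts ∧
        CrossEdge Gi Hi (compOf Hi u).verts (compOf Hi w).verts) ∨
      (CrossEdge Gi Hi (compOf Hi u).verts (compOf Hi v).verts ∧
        CrossEdge Gi Hi (compOf Hi u).verts (compOf Hi w).verts)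

/-- The condition of the gluing lemma: every edge of `Hi` is in a 2-edge-connected
component of `Hi`, or lies on an `x`-`y` path in `Hi` for distinct
`x, y ∈ {u, v, w}` such that `x` and `y` are also connected in `Hj`. -/
def EdgeCond {G : SimpleGraph V} (Hi Hj : G.Subgraph) (u v w : V) : Prop :=
  ∀ a b : V, Hi.Adj a b →
    SameTwoEC Hi a b ∨
      ∃ x ∈ ({u, v, w} : Set V), ∃ y ∈ ({u, v, w} : Set V), x ≠ y ∧
        (∃ p : Hi.spanningCoe.Walk x y, p.IsPath ∧ s(a, b) ∈ p.edges) ∧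
        Hj.spanningCoe.Reachable x y

/-- The set of all potential edges among a vertex set `S` (used to model the
contraction of `S` into a single vertex). -/
def cliqueOn (S : Set V) : Set (Sym2 V) :=
  {e | ∃ a ∈ S, ∃ b ∈ S, a ≠ b ∧ e = s(a, b)}

/-- The edge set `K` forms a 2-edge-connected spanning subgraph of the graph on `Wt`
with the set `S ⊆ Wt` contracted into a single vertex: modelled by making `S` into a
blob using `cliqueOn S` (whose edges are never deleted). -/
def ContractedTwoECSS (Wt S : Set V) (K : Set (Sym2 V)) : Prop :=
  ((SimpleGraph.fromEdgeSet (K ∪ cliqueOn S)).induce Wt).Connected ∧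
  ∀ e ∈ K, ((SimpleGraph.fromEdgeSet ((K \ {e}) ∪ cliqueOn S)).induce Wt).Connected

end ECSS

/-! Write `S = {u, v, w}` and `Wᵢ = Vᵢ ∪ S`. Since `H'ᵢ` is 2-edge-connected after contracting `S`,
every vertex of `Wᵢ` reaches `S` in `Hᵢ` minus any one edge, but `S` itself need not be connected
within a side. If two terminals lie in different components of `Hᵢ ∪ Fᵢ`, let `X` be the
component of one of them: one of `S ∩ X`, `S \ X` is a single terminal `t`, and if no edge of `G`
at `Vᵢ` left `X`, then `t` would be a cut vertex or `S \ {t}` a non-isolating 2-vertex cut.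
Adding such an edge to `Fᵢ` brings a new terminal into the component of a fixed one, so two edges
per side make `S` connected within each side. The two augmented sides are edge-disjoint, so after
deleting any edge `S` stays connected through one side, and every vertex still reaches `S` within
its own side. -/

theorem SimpleGraph.Reachable.mem_of_adj_closed {W : Type*} {Γ : SimpleGraph W} {A : Set W}
    (hA : ∀ a b, Γ.Adj a b → a ∈ A → b ∈ A) {a b : W} (h : Γ.Reachable a b) (ha : a ∈ A) :
    b ∈ A := by
  obtain ⟨p⟩ := h
  induction p with
  | nil => exact ha
  | cons hadj _ ih => exact ih (hA _ _ hadj ha)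

namespace ECSS

section Cuts

variable {W : Type*} {Γ G : SimpleGraph W}

theorem numComponents_eq_one (h : Γ.Connected) : numComponents Γ = 1 :=
  Nat.card_eq_one_iff_unique.mpr
    ⟨h.preconnected.subsingleton_connectedComponent, ⟨Γ.connectedComponentMk h.nonempty.some⟩⟩

theorem two_le_numComponents [Finite W] {a b : W} (h : ¬ Γ.Reachable a b) :
    2 ≤ numComponents Γ :=
  Finite.one_lt_card_iff_nontrivial.mpr ⟨_, _, fun hc => h (ConnectedComponent.exact hc)⟩

theorem supp_connectedComponentMk_eq_of_numComponents_eq_two (h2 : numComponents Γ = 2)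
    {A : Set W} (hA : ∀ a b, Γ.Adj a b → a ∈ A → b ∈ A) {p d : W} (hp : p ∈ A) (hd : d ∉ A) :
    (Γ.connectedComponentMk p).supp = A := by
  ext z
  rw [ConnectedComponent.mem_supp_iff]
  refine ⟨fun hz => (ConnectedComponent.exact hz).symm.mem_of_adj_closed hA hp, fun hz => ?_⟩
  by_contra hzp
  obtain ⟨c, -, hc⟩ := (Nat.card_eq_two_iff' (Γ.connectedComponentMk p)).mp h2
  have hdp : Γ.connectedComponentMk d ≠ Γ.connectedComponentMk p := fun h =>
    hd ((ConnectedComponent.exact h).symm.mem_of_adj_closed hA hp)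
  exact hd ((ConnectedComponent.exact ((hc _ hzp).trans (hc _ hdp).symm)).mem_of_adj_closed hA hz)

theorem supp_eq_or_eq_compl_of_numComponents_eq_two (h2 : numComponents Γ = 2) {A : Set W}
    (hA : ∀ a b, Γ.Adj a b → a ∈ A → b ∈ A) {p d : W} (hp : p ∈ A) (hd : d ∉ A)
    (c : Γ.ConnectedComponent) : c.supp = A ∨ c.supp = Aᶜ := by
  have hAc : ∀ a b, Γ.Adj a b → a ∈ Aᶜ → b ∈ Aᶜ := fun a b hab ha hb => ha (hA b a hab.symm hb)
  obtain ⟨c', -, hc'⟩ := (Nat.card_eq_two_iff' (Γ.connectedComponentMk p)).mp h2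
  by_cases hcp : c = Γ.connectedComponentMk p
  · exact .inl (hcp ▸ supp_connectedComponentMk_eq_of_numComponents_eq_two h2 hA hp hd)
  have hdp : Γ.connectedComponentMk d ≠ Γ.connectedComponentMk p := fun h =>
    hd ((ConnectedComponent.exact h).symm.mem_of_adj_closed hA hp)
  rw [(hc' c hcp).trans (hc' _ hdp).symm]
  exact .inr (supp_connectedComponentMk_eq_of_numComponents_eq_two h2 hAc hd (not_not.mpr hp))

theorem induce_compl_adj_closed {T A : Set W} (hA : ∀ a ∈ A, ∀ b, G.Adj a b → b ∈ A ∪ T)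
    (a b : ↥Tᶜ) (hab : (G.induce Tᶜ).Adj a b) (ha : a ∈ Subtype.val ⁻¹' A) :
    b ∈ Subtype.val ⁻¹' A :=
  (hA a ha b hab).resolve_right b.2

theorem isCutSet_of_adj_closed [Finite W] (hG : G.Connected) {T A : Set W}
    (hA : ∀ a ∈ A, ∀ b, G.Adj a b → b ∈ A ∪ T) {p d : W} (hp : p ∈ A \ T) (hd : d ∉ A ∪ T) :
    IsCutSet G T := by
  unfold IsCutSet
  rw [numComponents_eq_one hG]
  refine two_le_numComponents (a := ⟨p, hp.2⟩) (b := ⟨d, fun h => hd (.inr h)⟩) fun h => ?_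
  exact hd (.inl (h.mem_of_adj_closed (induce_compl_adj_closed hA) hp.1))

theorem isNonIsolating2Cut_of_adj_closed [Finite W] (hG : G.Connected) {T A : Set W}
    (hT : T.ncard = 2) (hA : ∀ a ∈ A, ∀ b, G.Adj a b → b ∈ A ∪ T) {p q d e : W}
    (hp : p ∈ A \ T) (hq : q ∈ A \ T) (hpq : p ≠ q) (hd : d ∉ A ∪ T) (he : e ∉ A ∪ T)
    (hde : d ≠ e) : IsNonIsolating2Cut G T := by
  refine ⟨⟨hT, isCutSet_of_adj_closed hG hA hp hd⟩, ?_⟩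
  rintro ⟨-, h2, c, hc⟩
  have hd' : d ∉ T := fun h => hd (.inr h)
  have he' : e ∉ T := fun h => he (.inr h)
  have : 1 < c.supp.ncard := by
    rcases supp_eq_or_eq_compl_of_numComponents_eq_two h2 (induce_compl_adj_closed hA)
      (p := ⟨p, hp.2⟩) (d := ⟨d, hd'⟩) hp.1 (fun h => hd (.inl h)) c with h | h <;>
      rw [h, Set.one_lt_ncard]
    · exact ⟨⟨p, hp.2⟩, hp.1, ⟨q, hq.2⟩, hq.1, fun h => hpq (congrArg Subtype.val h)⟩
    · exact ⟨⟨d, hd'⟩, fun h => hd (.inl h), ⟨e, he'⟩, fun h => he (.inl h),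
        fun h => hde (congrArg Subtype.val h)⟩
  omega

end Cuts

theorem exists_subset_forall_reachable_of_step {V : Type*} {H E : Set (Sym2 V)} {S : Set V}
    (hS : S.Finite) {x : V}
    (hstep : ∀ K, H ⊆ K → (∃ t ∈ S, ¬ (fromEdgeSet K).Reachable x t) →
      ∃ e ∈ E, ∃ t ∈ S,
        ¬ (fromEdgeSet K).Reachable x t ∧ (fromEdgeSet (insert e K)).Reachable x t) :
    ∃ F ⊆ E, F.ncard ≤ (S \ {y | (fromEdgeSet H).Reachable x y}).ncard ∧
      ∀ t ∈ S, (fromEdgeSet (H ∪ F)).Reachable x t := by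
  suffices h : ∀ n K, H ⊆ K → (S \ {y | (fromEdgeSet K).Reachable x y}).ncard ≤ n →
      ∃ F ⊆ E, F.ncard ≤ n ∧ ∀ t ∈ S, (fromEdgeSet (K ∪ F)).Reachable x t from
    h _ H subset_rfl le_rfl
  intro n
  induction n with
  | zero =>
    intro K _ hn
    refine ⟨∅, Set.empty_subset _, by simp, ?_⟩
    rw [Set.union_empty]
    exact Set.sdiff_eq_empty.mp ((Set.ncard_eq_zero (hS.sdiff)).mp (Nat.le_zero.mp hn))
  | succ n ih =>
    intro K hHK hn
    by_cases hall : ∀ t ∈ S, (fromEdgeSet K).Reachable x t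
    · exact ⟨∅, Set.empty_subset _, by simp, by rwa [Set.union_empty]⟩
    push Not at hall
    obtain ⟨e, he, t, htS, hKt, hKt'⟩ := hstep K hHK hall
    have hmono : fromEdgeSet K ≤ fromEdgeSet (insert e K) :=
      fromEdgeSet_mono (Set.subset_insert e K)
    have hlt : (S \ {y | (fromEdgeSet (insert e K)).Reachable x y}).ncard <
        (S \ {y | (fromEdgeSet K).Reachable x y}).ncard :=
      Set.ncard_lt_ncard ⟨Set.sdiff_subset_sdiff_right fun y hy => Reachable.mono hmono hy,
        fun h => (h ⟨htS, hKt⟩).2 hKt'⟩ hS.sdiff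
    obtain ⟨F, hFE, hFn, hF⟩ := ih (insert e K) (hHK.trans (Set.subset_insert e K)) (by omega)
    refine ⟨insert e F, Set.insert_subset he hFE, (Set.ncard_insert_le e F).trans (by omega), ?_⟩
    rwa [Set.union_insert, ← Set.insert_union]

section Separation

variable {V : Type*} [Finite V] {G : SimpleGraph V} {S Vi Vj : Set V}

theorem not_forall_adj_mem_iff_of_inter_eq_singleton (hG : G.Connected)
    (hcv : ∀ x : V, ¬ IsCutSet G {x}) (hni : ∀ T : Set V, ¬ IsNonIsolating2Cut G T)
    (hS : S.ncard = 3) (hVS : Disjoint Vi S) (hnbr : ∀ a ∈ Vi, ∀ b, G.Adj a b → b ∈ Vi ∪ S)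
    (hVi : 2 ≤ Vi.ncard) {d : V} (hd : d ∉ Vi ∪ S) {X : Set V} {t : V} (ht : S ∩ X = {t}) :
    ¬ ∀ a ∈ Vi, ∀ b, G.Adj a b → (a ∈ X ↔ b ∈ X) := by
  intro hX
  obtain ⟨htS, htX⟩ : t ∈ S ∩ X := ht ▸ rfl
  have hdt : d ≠ t := fun h => hd (.inr (h ▸ htS))
  by_cases hViX : (Vi ∩ X).Nonempty
  · -- `t` alone separates `Vi ∩ X` from `d`
    obtain ⟨p, hp⟩ := hViX
    refine hcv t (isCutSet_of_adj_closed hG (A := Vi ∩ X) (d := d) (fun a ha b hab => ?_)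
      ⟨hp, fun h => hVS.ne_of_mem hp.1 htS h⟩ ?_)
    · have hbX := (hX a ha.1 b hab).mp ha.2
      rcases hnbr a ha.1 b hab with hb | hb
      · exact .inl ⟨hb, hbX⟩
      · exact .inr (ht ▸ ⟨hb, hbX⟩)
    · rintro (h | h)
      exacts [hd (.inl h.1), hdt h]
  · -- the other two terminals separate `Vi` from `{t, d}`
    have hVX : ∀ a ∈ Vi, a ∉ X := fun a ha haX => hViX ⟨a, ha, haX⟩
    obtain ⟨p, hp, q, hq, hpq⟩ := (Set.one_lt_ncard).mp hVi
    have hT : (S \ {t}).ncard = 2 := by rw [Set.ncard_sdiff_singleton_of_mem htS, hS]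
    refine hni _ (isNonIsolating2Cut_of_adj_closed hG hT (A := Vi) (fun a ha b hab => ?_)
      ⟨hp, fun h => hVS.ne_of_mem hp h.1 rfl⟩ ⟨hq, fun h => hVS.ne_of_mem hq h.1 rfl⟩ hpq
      (d := t) ?_ (fun h => hd (h.imp id (fun h' => h'.1))) hdt.symm)
    · rcases hnbr a ha b hab with hb | hb
      · exact .inl hb
      · refine .inr ⟨hb, fun hbt => hVX a ha ((hX a ha b hab).mpr ?_)⟩
        exact (Set.mem_singleton_iff.mp hbt) ▸ htX
    · rintro (h | h)
      exacts [hVS.ne_of_mem h htS rfl, h.2 rfl]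

theorem not_forall_adj_mem_iff (hG : G.Connected) (hcv : ∀ x : V, ¬ IsCutSet G {x})
    (hni : ∀ T : Set V, ¬ IsNonIsolating2Cut G T) (hS : S.ncard = 3) (hVS : Disjoint Vi S)
    (hnbr : ∀ a ∈ Vi, ∀ b, G.Adj a b → b ∈ Vi ∪ S) (hVi : 2 ≤ Vi.ncard) {d : V}
    (hd : d ∉ Vi ∪ S) {X : Set V} (hin : (S ∩ X).Nonempty) (hout : (S \ X).Nonempty) :
    ¬ ∀ a ∈ Vi, ∀ b, G.Adj a b → (a ∈ X ↔ b ∈ X) := by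
  intro hX
  have hsum := Set.ncard_inter_add_ncard_sdiff_eq_ncard S X
  have hin' := (Set.ncard_pos).mpr hin
  have hout' := (Set.ncard_pos).mpr hout
  by_cases h1 : (S ∩ X).ncard = 1
  · obtain ⟨t, ht⟩ := Set.ncard_eq_one.mp h1
    exact not_forall_adj_mem_iff_of_inter_eq_singleton hG hcv hni hS hVS hnbr hVi hd ht hX
  · obtain ⟨t, ht⟩ := Set.ncard_eq_one.mp (show (S \ X).ncard = 1 by omega)
    exact not_forall_adj_mem_iff_of_inter_eq_singleton hG hcv hni hS hVS hnbr hVi hd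
      (X := Xᶜ) ht fun a ha b hab => not_congr (hX a ha b hab)

theorem exists_edge_reachable_of_not_reachable (hG : G.Connected)
    (hcv : ∀ x : V, ¬ IsCutSet G {x}) (hni : ∀ T : Set V, ¬ IsNonIsolating2Cut G T)
    (hS : S.ncard = 3) (hVS : Disjoint Vi S) (hnbr : ∀ a ∈ Vi, ∀ b, G.Adj a b → b ∈ Vi ∪ S)
    (hVi : 2 ≤ Vi.ncard) {d : V} (hd : d ∉ Vi ∪ S) {K : Set (Sym2 V)}
    (hatt : ∀ p ∈ Vi ∪ S, ∃ s ∈ S, (fromEdgeSet K).Reachable p s) {x : V} (hx : x ∈ S)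
    (hK : ∃ t ∈ S, ¬ (fromEdgeSet K).Reachable x t) :
    ∃ e ∈ {e ∈ G.edgeSet | ∃ a ∈ e, a ∈ Vi}, ∃ t ∈ S,
      ¬ (fromEdgeSet K).Reachable x t ∧ (fromEdgeSet (insert e K)).Reachable x t := by
  set X : Set V := {y | (fromEdgeSet K).Reachable x y}
  have hcross := not_forall_adj_mem_iff hG hcv hni hS hVS hnbr hVi hd (X := X)
    ⟨x, hx, Reachable.refl x⟩ (hK.imp fun _ ht => ⟨ht.1, ht.2⟩)
  push Not at hcross
  obtain ⟨a, ha, b, hab, hcross⟩ := hcross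
  obtain ⟨y, z, hyz, hy, hzW, hz⟩ : ∃ y z, s(y, z) = s(a, b) ∧ y ∈ X ∧ z ∈ Vi ∪ S ∧ z ∉ X := by
    rcases hcross with ⟨haX, hbX⟩ | ⟨haX, hbX⟩
    · exact ⟨a, b, rfl, haX, hnbr a ha b hab, hbX⟩
    · exact ⟨b, a, Sym2.eq_swap, hbX, .inl ha, haX⟩
  obtain ⟨s, hsS, hzs⟩ := hatt z hzW
  refine ⟨s(a, b), ⟨hab, a, Sym2.mem_mk_left a b, ha⟩, s, hsS, fun h => hz ?_, ?_⟩
  · exact h.trans hzs.symm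
  · have hmono := fromEdgeSet_mono (Set.subset_insert (s(a, b)) K)
    have hyz' : (fromEdgeSet (insert s(a, b) K)).Adj y z :=
      (fromEdgeSet_adj _).mpr ⟨hyz ▸ Set.mem_insert _ _, fun h => hz (h ▸ hy)⟩
    exact ((Reachable.mono hmono hy).trans hyz'.reachable).trans (hzs.mono hmono)

theorem exists_augmentation_forall_reachable (hG : G.Connected)
    (hcv : ∀ x : V, ¬ IsCutSet G {x}) (hni : ∀ T : Set V, ¬ IsNonIsolating2Cut G T)
    (hS : S.ncard = 3) (hpart : Vi ∪ Vj = Sᶜ) (hdisj : Disjoint Vi Vj)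
    (hnoedge : ∀ a ∈ Vi, ∀ b ∈ Vj, ¬ G.Adj a b) (hVi : 2 ≤ Vi.ncard) (hVj : Vj.Nonempty)
    {H : Set (Sym2 V)} (hatt : ∀ p ∈ Vi ∪ S, ∃ s ∈ S, (fromEdgeSet H).Reachable p s) :
    ∃ F ⊆ {e ∈ G.edgeSet | ∃ a ∈ e, a ∈ Vi}, F.ncard ≤ 2 ∧
      ∀ s ∈ S, ∀ t ∈ S, (fromEdgeSet (H ∪ F)).Reachable s t := by
  have hVS : Disjoint Vi S := by
    rw [← Set.subset_compl_iff_disjoint_right, ← hpart]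
    exact Set.subset_union_left
  have hnbr : ∀ a ∈ Vi, ∀ b, G.Adj a b → b ∈ Vi ∪ S := by
    intro a ha b hab
    by_contra hb
    have hb' : b ∈ Vi ∪ Vj := hpart ▸ fun h => hb (.inr h)
    exact hnoedge a ha b (hb'.resolve_left fun h => hb (.inl h)) hab
  obtain ⟨d, hdVj⟩ := hVj
  have hd : d ∉ Vi ∪ S := by
    rintro (h | h)
    exacts [hdisj.ne_of_mem h hdVj rfl, (hpart.symm ▸ Set.mem_union_right Vi hdVj : d ∈ Sᶜ) h]
  obtain ⟨x, hx⟩ : S.Nonempty := Set.nonempty_of_ncard_ne_zero (by omega)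
  obtain ⟨F, hFE, hFn, hF⟩ := exists_subset_forall_reachable_of_step (H := H) (Set.toFinite S)
    (x := x) fun K hHK hK => exists_edge_reachable_of_not_reachable hG hcv hni hS hVS hnbr hVi
      hd (fun p hp => (hatt p hp).imp fun s hs => ⟨hs.1, hs.2.mono (fromEdgeSet_mono hHK)⟩)
      hx hK
  have hcard : (S \ {y | (fromEdgeSet H).Reachable x y}).ncard ≤ 2 := by
    calc _ ≤ (S \ {x}).ncard :=
          Set.ncard_le_ncard (Set.sdiff_subset_sdiff_right (by simp))
      _ = 2 := by rw [Set.ncard_sdiff_singleton_of_mem hx, hS]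
  exact ⟨F, hFE, hFn.trans hcard, fun s hs t ht => (hF s hs).symm.trans (hF t ht)⟩

end Separation

section Gluing

variable {V : Type*}

theorem exists_reachable_mem_of_induce_connected {Wt S : Set V} {K : Set (Sym2 V)}
    (hSW : S ⊆ Wt) (hconn : ((fromEdgeSet (K ∪ cliqueOn S)).induce Wt).Connected) {s₀ : V}
    (hs₀ : s₀ ∈ S) {x : V} (hx : x ∈ Wt) : ∃ s ∈ S, (fromEdgeSet K).Reachable x s := by
  have hclosed : ∀ a b : ↥Wt, ((fromEdgeSet (K ∪ cliqueOn S)).induce Wt).Adj a b →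
      (∃ s ∈ S, (fromEdgeSet K).Reachable a s) → ∃ s ∈ S, (fromEdgeSet K).Reachable b s := by
    rintro a b ⟨hK | ⟨c, hc, c', hc', -, hcc'⟩, hab⟩ ⟨s, hs, has⟩
    · exact ⟨s, hs, ((fromEdgeSet_adj K).mpr ⟨hK, hab.symm ∘ Eq.symm⟩).reachable.symm.trans has⟩
    · have hb : (b : V) ∈ s(c, c') := hcc' ▸ Sym2.mem_mk_right _ _
      rcases Sym2.mem_iff.mp hb with h | h
      exacts [⟨c, hc, h ▸ Reachable.refl _⟩, ⟨c', hc', h ▸ Reachable.refl _⟩]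
  exact (hconn.preconnected ⟨s₀, hSW hs₀⟩ ⟨x, hx⟩).mem_of_adj_closed
    (A := {a : ↥Wt | ∃ s ∈ S, (fromEdgeSet K).Reachable a s}) hclosed ⟨s₀, hs₀, Reachable.refl _⟩

theorem ContractedTwoECSS.exists_reachable_sdiff {Wt S : Set V} {K : Set (Sym2 V)}
    (h : ContractedTwoECSS Wt S K) (hSW : S ⊆ Wt) {s₀ : V} (hs₀ : s₀ ∈ S) (e : Sym2 V) {x : V}
    (hx : x ∈ Wt) : ∃ s ∈ S, (fromEdgeSet (K \ {e})).Reachable x s := by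
  by_cases he : e ∈ K
  · exact exists_reachable_mem_of_induce_connected hSW (h.2 e he) hs₀ hx
  · rw [Set.sdiff_singleton_eq_self he]
    exact exists_reachable_mem_of_induce_connected hSW h.1 hs₀ hx

theorem connected_of_forall_exists_reachable {Γ : SimpleGraph V} {S : Set V} {s₀ : V}
    (hs₀ : s₀ ∈ S) (hx : ∀ x, ∃ s ∈ S, Γ.Reachable x s)
    (hS : ∀ s ∈ S, ∀ t ∈ S, Γ.Reachable s t) : Γ.Connected :=
  (connected_iff_exists_forall_reachable Γ).mpr ⟨s₀, fun y =>
    let ⟨s, hs, hys⟩ := hx y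
    (hS s₀ hs₀ s hs).trans hys.symm⟩

theorem isTwoEdgeConnected_fromEdgeSet {K : Set (Sym2 V)} (v : V)
    (h : ∀ e, (fromEdgeSet (K \ {e})).Connected) : IsTwoEdgeConnected (fromEdgeSet K) :=
  ⟨(h s(v, v)).mono (fromEdgeSet_mono Set.sdiff_subset), fun e _ => by
    rw [deleteEdges_fromEdgeSet]
    exact h e⟩

theorem isTwoEdgeConnected_of_sides {V1 V2 S : Set V} (hpart : V1 ∪ V2 = Sᶜ) {s₀ : V}
    (hs₀ : s₀ ∈ S) {H1 H2 F1 F2 : Set (Sym2 V)} (h1 : ContractedTwoECSS (V1 ∪ S) S H1)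
    (h2 : ContractedTwoECSS (V2 ∪ S) S H2)
    (hF1 : ∀ s ∈ S, ∀ t ∈ S, (fromEdgeSet (H1 ∪ F1)).Reachable s t)
    (hF2 : ∀ s ∈ S, ∀ t ∈ S, (fromEdgeSet (H2 ∪ F2)).Reachable s t)
    (hdisj : ∀ e ∈ H2 ∪ F2, e ∉ H1 ∪ F1) :
    IsTwoEdgeConnected (fromEdgeSet (H1 ∪ H2 ∪ (F1 ∪ F2))) := by
  refine isTwoEdgeConnected_fromEdgeSet s₀ fun e =>
    connected_of_forall_exists_reachable hs₀ (fun x => ?_) fun s hs t ht => ?_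
  · have hx : x ∈ V1 ∪ S ∨ x ∈ V2 ∪ S := by
      by_cases hx : x ∈ S
      · exact .inl (.inr hx)
      rcases (hpart ▸ hx : x ∈ V1 ∪ V2) with h | h
      exacts [.inl (.inl h), .inr (.inl h)]
    rcases hx with hx | hx
    · obtain ⟨s, hs, hr⟩ := h1.exists_reachable_sdiff Set.subset_union_right hs₀ e hx
      exact ⟨s, hs, hr.mono (fromEdgeSet_mono (Set.sdiff_subset_sdiff_left (by tauto_set)))⟩
    · obtain ⟨s, hs, hr⟩ := h2.exists_reachable_sdiff Set.subset_union_right hs₀ e hx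
      exact ⟨s, hs, hr.mono (fromEdgeSet_mono (Set.sdiff_subset_sdiff_left (by tauto_set)))⟩
  · -- `e` misses one of the two edge-disjoint sides, and that side alone connects `S`
    by_cases he : e ∈ H2 ∪ F2
    · refine (hF1 s hs t ht).mono (fromEdgeSet_mono fun f hf => ⟨by tauto_set, ?_⟩)
      rintro rfl
      exact hdisj f he hf
    · refine (hF2 s hs t ht).mono (fromEdgeSet_mono fun f hf => ⟨by tauto_set, ?_⟩)
      rintro rfl
      exact he hf

variable {G : SimpleGraph V} {Vi Vj : Set V} {H F : Set (Sym2 V)}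

theorem notMem_of_mem_union {S : Set V} (hpart : Vi ∪ Vj = Sᶜ) (hdisj : Disjoint Vi Vj)
    (hnoedge : ∀ a ∈ Vi, ∀ b ∈ Vj, ¬ G.Adj a b)
    (hH : H ⊆ {e ∈ G.edgeSet | ∀ x ∈ e, x ∈ Vi ∪ S})
    (hF : F ⊆ {e ∈ G.edgeSet | ∃ a ∈ e, a ∈ Vi}) {e : Sym2 V} (he : e ∈ H ∪ F) {x : V}
    (hx : x ∈ e) : x ∉ Vj := by
  rcases he with he | he
  · rcases (hH he).2 x hx with h | h
    · exact hdisj.notMem_of_mem_left h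
    · exact fun hxV => (hpart ▸ Set.mem_union_right Vi hxV : x ∈ Sᶜ) h
  · obtain ⟨heG, a, ha, haV⟩ := hF he
    by_cases hxa : x = a
    · exact hxa ▸ hdisj.notMem_of_mem_left haV
    · rw [(Sym2.mem_and_mem_iff (Ne.symm hxa)).mp ⟨ha, hx⟩, mem_edgeSet] at heG
      exact fun hxV => hnoedge a haV x hxV heG

theorem exists_mem_of_mem_union {u v w : V}
    (hH : H ⊆ {e ∈ G.edgeSet | ∀ x ∈ e, x ∈ Vi ∪ {u, v, w}} \ {s(u, v), s(v, w), s(u, w)})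
    (hF : F ⊆ {e ∈ G.edgeSet | ∃ a ∈ e, a ∈ Vi}) {e : Sym2 V} (he : e ∈ H ∪ F) :
    ∃ x ∈ e, x ∈ Vi := by
  rcases he with he | he
  · obtain ⟨⟨heG, hV⟩, hT⟩ := hH he
    induction e using Sym2.ind with
    | _ a b =>
      by_contra! h
      have ha := (hV a (Sym2.mem_mk_left a b)).resolve_left (h a (Sym2.mem_mk_left a b))
      have hb := (hV b (Sym2.mem_mk_right a b)).resolve_left (h b (Sym2.mem_mk_right a b))
      simp only [Set.mem_insert_iff, Set.mem_singleton_iff] at ha hb hT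
      rcases ha with rfl | rfl | rfl <;> rcases hb with rfl | rfl | rfl <;> simp_all [Sym2.eq_swap]
  · exact (hF he).2

end Gluing

end ECSS

theorem statement_17_general {V : Type*} [Fintype V] (G : SimpleGraph V)
    (hG : ECSS.IsTwoEdgeConnected G)
    (hcv : ∀ x : V, ¬ ECSS.IsCutSet G {x})
    (hni : ∀ S : Set V, ¬ ECSS.IsNonIsolating2Cut G S)
    (u v w : V) (hcut : ECSS.IsLarge3Cut G {u, v, w})
    (V1 V2 : Set V) (hunion : V1 ∪ V2 = ({u, v, w} : Set V)ᶜ) (hdisj : Disjoint V1 V2)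
    (h7 : 7 ≤ V1.ncard) (h12 : V1.ncard ≤ V2.ncard)
    (hnoedge : ∀ a ∈ V1, ∀ b ∈ V2, ¬ G.Adj a b)
    (H1 H2 : Set (Sym2 V))
    (hH1 : H1 ⊆ {e ∈ G.edgeSet | ∀ x ∈ e, x ∈ V1 ∪ {u, v, w}})
    (hH2 : H2 ⊆ {e ∈ G.edgeSet | ∀ x ∈ e, x ∈ V2 ∪ {u, v, w}}
      \ {s(u, v), s(v, w), s(u, w)})
    (h2ec1 : ECSS.ContractedTwoECSS (V1 ∪ {u, v, w}) {u, v, w} H1)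
    (h2ec2 : ECSS.ContractedTwoECSS (V2 ∪ {u, v, w}) {u, v, w} H2) :
    ∃ F : Set (Sym2 V), F ⊆ G.edgeSet ∧ F.ncard ≤ 4 ∧
      SimpleGraph.fromEdgeSet (H1 ∪ H2 ∪ F) ≤ G ∧
      ECSS.IsTwoEdgeConnected (SimpleGraph.fromEdgeSet (H1 ∪ H2 ∪ F)) := by
  have huS : u ∈ ({u, v, w} : Set V) := Set.mem_insert u _
  obtain ⟨F1, hF1, hF1n, hF1r⟩ := ECSS.exists_augmentation_forall_reachable hG.1 hcv hni
    hcut.1.1 hunion hdisj hnoedge (by omega) (Set.nonempty_of_ncard_ne_zero (by omega))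
    fun p hp => ECSS.exists_reachable_mem_of_induce_connected Set.subset_union_right h2ec1.1 huS hp
  obtain ⟨F2, hF2, hF2n, hF2r⟩ := ECSS.exists_augmentation_forall_reachable hG.1 hcv hni
    hcut.1.1 (by rwa [Set.union_comm]) hdisj.symm (fun a ha b hb hab => hnoedge b hb a ha hab.symm)
    (by omega) (Set.nonempty_of_ncard_ne_zero (by omega))
    fun p hp => ECSS.exists_reachable_mem_of_induce_connected Set.subset_union_right h2ec2.1 huS hp
  have hside : ∀ e ∈ H2 ∪ F2, e ∉ H1 ∪ F1 := fun e he2 he1 =>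
    let ⟨_, hx, hxV2⟩ := ECSS.exists_mem_of_mem_union hH2 hF2 he2
    ECSS.notMem_of_mem_union hunion hdisj hnoedge hH1 hF1 he1 hx hxV2
  have hF : F1 ∪ F2 ⊆ G.edgeSet :=
    Set.union_subset (hF1.trans (Set.sep_subset _ _)) (hF2.trans (Set.sep_subset _ _))
  have hE : H1 ∪ H2 ∪ (F1 ∪ F2) ⊆ G.edgeSet :=
    Set.union_subset (Set.union_subset (hH1.trans (Set.sep_subset _ _))
      (hH2.trans (Set.sdiff_subset.trans (Set.sep_subset _ _)))) hF
  exact ⟨F1 ∪ F2, hF, (Set.ncard_union_le F1 F2).trans (by omega),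
    (fromEdgeSet_mono hE).trans_eq (fromEdgeSet_edgeSet G),
    ECSS.isTwoEdgeConnected_of_sides hunion huS h2ec1 h2ec2 hF1r hF2r hside⟩

/-- Let `G` be 2-edge-connected, without cut vertices and without
non-isolating 2-vertex cuts, `{u,v,w}` a large 3-vertex cut, `(V1, V2)` a partition
of `V(G) ∖ {u,v,w}` with `7 ≤ |V1| ≤ |V2|` and no edges between `V1` and `V2`. If
`H'_1` and `H'_2` are (edge sets of) 2-edge-connected spanning subgraphs of
`G'_1 = G_1|{u,v,w}` and `G'_2 = G_2|{u,v,w}`, respectively, then there is an edge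
set `F' ⊆ E(G)` with `|F'| ≤ 4` such that `H'_1 ∪ H'_2 ∪ F'` is a 2-edge-connected
spanning subgraph of `G`. -/
theorem statement_17 {V : Type*} [Fintype V] [DecidableEq V] (G : SimpleGraph V)
    (hG : ECSS.IsTwoEdgeConnected G)
    (hcv : ∀ x : V, ¬ ECSS.IsCutSet G {x})
    (hni : ∀ S : Set V, ¬ ECSS.IsNonIsolating2Cut G S)
    (u v w : V) (hcut : ECSS.IsLarge3Cut G {u, v, w})
    (V1 V2 : Set V) (hunion : V1 ∪ V2 = ({u, v, w} : Set V)ᶜ) (hdisj : Disjoint V1 V2)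
    (h7 : 7 ≤ V1.ncard) (h12 : V1.ncard ≤ V2.ncard)
    (hnoedge : ∀ a ∈ V1, ∀ b ∈ V2, ¬ G.Adj a b)
    (H1 H2 : Set (Sym2 V))
    (hH1 : H1 ⊆ {e ∈ G.edgeSet | ∀ x ∈ e, x ∈ V1 ∪ {u, v, w}})
    (hH2 : H2 ⊆ {e ∈ G.edgeSet | ∀ x ∈ e, x ∈ V2 ∪ {u, v, w}}
      \ {s(u, v), s(v, w), s(u, w)})
    (h2ec1 : ECSS.ContractedTwoECSS (V1 ∪ {u, v, w}) {u, v, w} H1)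
    (h2ec2 : ECSS.ContractedTwoECSS (V2 ∪ {u, v, w}) {u, v, w} H2) :
    ∃ F : Set (Sym2 V), F ⊆ G.edgeSet ∧ F.ncard ≤ 4 ∧
      SimpleGraph.fromEdgeSet (H1 ∪ H2 ∪ F) ≤ G ∧
      ECSS.IsTwoEdgeConnected (SimpleGraph.fromEdgeSet (H1 ∪ H2 ∪ F)) :=
  statement_17_general G hG hcv hni u v w hcut V1 V2 hunion hdisj h7 h12 hnoedge H1 H2 hH1 hH2 h2ec1
    h2ec2
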